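/- arXiv:2507.13203 — 2 statements merged into one kernel-verified Lean document; each statement's English description precedes it below -/
import Mathlib

section
/- Let χ : ℤ → ZMod 2 be a function and let S ⊆ ℤ be a nonempty finite set such that for every k ∈ ℤ, the sum over n ∈ S of χ(n - k) equals 0 in ZMod 2. Then χ is periodic, i.e., there exists p > 0 such that χ(n + p) = χ(n) for all n ∈ ℤ. -/
/-!
A function `ψ : ℤ → G` whose translated sums `∑ n ∈ S, ψ (n + t)` all vanish satisfies a linear
recurrence of order `L = max S - min S`, which can be solved both forwards (for the value at the
largest element of `S`) and backwards (for the value at the smallest), so `ψ` is determined by any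
`L` consecutive values. If `χ` takes values in a finite group, two of its length-`L` windows
coincide by pigeonhole, say at `a < b`; then `n ↦ χ (n + (b - a)) - χ n` solves the same
recurrence and vanishes on a window, hence everywhere.
-/

open Finset

section Recurrence

variable {G : Type*} [AddCommGroup G] {ψ : ℤ → G} {S : Finset ℤ}

theorem eq_zero_of_le_of_window_eq_zero {M : ℤ} {L : ℕ} (hM : M ∈ S)
    (hSM : ∀ n ∈ S, M - L ≤ n ∧ n ≤ M) (hψ : ∀ t, ∑ n ∈ S, ψ (n + t) = 0) {a : ℤ}
    (ha : ∀ k, a ≤ k → k < a + L → ψ k = 0) {k : ℤ} (hk : a ≤ k) : ψ k = 0 := by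
  obtain ⟨i, rfl⟩ : ∃ i : ℕ, k = a + i := ⟨(k - a).toNat, by omega⟩
  induction i using Nat.strong_induction_on with
  | _ i ih =>
    rcases lt_or_ge i L with hi | hi
    · exact ha _ (by omega) (by omega)
    have hrec := hψ (a + i - M)
    rw [← add_sum_erase S _ hM, add_sub_cancel, add_eq_zero_iff_eq_neg] at hrec
    rw [hrec, neg_eq_zero]
    refine sum_eq_zero fun n hn => ?_
    obtain ⟨hnM, hnS⟩ := mem_erase.mp hn
    have := hSM n hnS
    have hlt : (i - (M - n).toNat : ℕ) < i := by omega
    convert ih _ hlt (by omega) using 2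
    omega

theorem eq_zero_of_window_eq_zero (hS : S.Nonempty) {L : ℕ}
    (hL : ∀ n ∈ S, ∀ n' ∈ S, n - n' ≤ L) (hψ : ∀ t, ∑ n ∈ S, ψ (n + t) = 0) {a : ℤ}
    (ha : ∀ k, a ≤ k → k < a + L → ψ k = 0) : ψ = 0 := by
  funext k
  rcases le_or_gt a k with hak | hka
  · refine eq_zero_of_le_of_window_eq_zero (S.max'_mem hS) (fun n hn => ?_) hψ ha hak
    exact ⟨by linarith [hL _ (S.max'_mem hS) n hn], S.le_max' n hn⟩
  -- Backwards, `ψ` is the forward case for `k ↦ ψ (-k)` and the reflected set `-S`.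
  have hψ' : ∀ t, ∑ n ∈ S.image (-·), ψ (-(n + t)) = 0 := fun t => by
    rw [sum_image (neg_injective.injOn)]
    simpa [neg_add_eq_sub, sub_eq_add_neg] using hψ (-t)
  have hm := S.min'_mem hS
  have := eq_zero_of_le_of_window_eq_zero (ψ := fun k => ψ (-k)) (L := L)
    (mem_image_of_mem _ hm) (by
      simp only [mem_image, forall_exists_index, and_imp]
      rintro _ n hn rfl
      exact ⟨by linarith [hL n hn _ hm], neg_le_neg (S.min'_le n hn)⟩)
    hψ' (a := -(a + L) + 1) (fun j _ _ => ha _ (by omega) (by omega)) (k := -k) (by omega)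
  simpa using this

end Recurrence

theorem exists_periodic_of_sum_add_eq_zero {G : Type*} [AddCommGroup G] [Finite G]
    {χ : ℤ → G} {S : Finset ℤ} (hS : S.Nonempty) (hχ : ∀ t, ∑ n ∈ S, χ (n + t) = 0) :
    ∃ p : ℤ, 0 < p ∧ Function.Periodic χ p := by
  set L := (S.max' hS - S.min' hS).toNat
  have hL : ∀ n ∈ S, ∀ n' ∈ S, n - n' ≤ L := fun n hn n' hn' => by
    have := S.le_max' n hn; have := S.min'_le n' hn'; omega
  obtain ⟨a, b, hab, hwin⟩ :=
    Finite.exists_ne_map_eq_of_infinite fun k : ℤ => fun j : Fin L => χ (k + j)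
  wlog hlt : a < b generalizing a b
  · exact this b a hab.symm hwin.symm (by omega)
  have hdiff : (fun n => χ (n + (b - a)) - χ n) = 0 := by
    refine eq_zero_of_window_eq_zero hS hL (fun t => ?_) (a := a) fun k hak hkL => ?_
    · simp only [sum_sub_distrib, add_assoc, hχ, sub_zero]
    · obtain ⟨j, rfl⟩ : ∃ j : Fin L, k = a + j :=
        ⟨⟨(k - a).toNat, by omega⟩, by rw [Fin.val_mk]; omega⟩
      simpa [sub_eq_zero, show a + j + (b - a) = b + j by ring] using (congrFun hwin j).symm
  exact ⟨b - a, by omega, fun n => sub_eq_zero.mp (congrFun hdiff n)⟩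

theorem stmt_0 (χ : ℤ → ZMod 2) (S : Finset ℤ) (hS : S.Nonempty)
    (h : ∀ k : ℤ, ∑ n ∈ S, χ (n - k) = 0) :
    ∃ p : ℤ, 0 < p ∧ ∀ n : ℤ, χ (n + p) = χ n :=
  exists_periodic_of_sum_add_eq_zero hS fun t => by simpa using h (-t)
end

section
/- With the setup of the previous statement (short exact sequence 1 → F → G →τ Q → 1, F finite, T = T⁻¹ a finite generating set of Q, S = τ⁻¹(T) ∪ F), define the conjugacy length ‖[g]‖_S = min{‖h‖_S : h conjugate to g in G}. Then for every g ∈ G \ F, ‖[g]‖_S = ‖[τ(g)]‖_T. -/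
/-- Word length of `g` with respect to a (symmetric) subset `S`. -/
noncomputable def wordLength {G : Type*} [Group G] (S : Set G) (g : G) : ℕ :=
  sInf {n | ∃ l : List G, l.length = n ∧ (∀ x ∈ l, x ∈ S) ∧ l.prod = g}

/-- Conjugacy length: the minimal word length over the conjugacy class. -/
noncomputable def conjLength {G : Type*} [Group G] (S : Set G) (g : G) : ℕ :=
  sInf (wordLength S '' {x | IsConj g x})

/-! Since `τ` kills exactly the generators in `F`, a word over `S` projects to a word over `T`
that is no longer, and for `τ g ≠ 1` a nonempty word over `T` lifts letter by letter to a word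
over `S` of the same length with product exactly `g`, the last letter absorbing the error in `F`.
Hence `‖g‖_S = ‖τ g‖_T` off `F` (also when `τ g` is not a product over `T`: then neither is `g`,
and both lengths are the junk value `sInf ∅ = 0`). Conjugacy classes of `G` map onto those of
`Q`, and a conjugacy class meeting `F` lies in `F`, so the two minima run over the same set of
values. -/

theorem Nat.sInf_eq_sInf_of_subset_of_forall_exists_le {A B : Set ℕ} (hBA : B ⊆ A)
    (hAB : ∀ n ∈ A, ∃ m ∈ B, m ≤ n) : sInf A = sInf B := by
  rcases B.eq_empty_or_nonempty with rfl | hB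
  · have hA : A = ∅ := Set.eq_empty_of_forall_notMem fun n hn => by
      obtain ⟨m, hm, -⟩ := hAB n hn
      exact hm
    rw [hA]
  · have hA : A.Nonempty := hB.mono hBA
    apply le_antisymm (Nat.sInf_le (hBA (Nat.sInf_mem hB)))
    obtain ⟨m, hm, hle⟩ := hAB _ (Nat.sInf_mem hA)
    exact (Nat.sInf_le hm).trans hle

section WordLength

variable {G Q : Type*} [Group G] [Group Q] {f : G →* Q} {S : Set G} {T : Set Q}

theorem exists_list_prod_eq_map_prod (hS : ∀ s ∈ S, f s ∈ T ∨ f s = 1) :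
    ∀ l : List G, (∀ x ∈ l, x ∈ S) →
      ∃ l' : List Q, l'.length ≤ l.length ∧ (∀ t ∈ l', t ∈ T) ∧ l'.prod = f l.prod
  | [], _ => ⟨[], le_rfl, by simp, by simp⟩
  | x :: l, hl => by
    obtain ⟨l', hlen, hl'T, hprod⟩ :=
      exists_list_prod_eq_map_prod hS l fun y hy => hl y (List.mem_cons_of_mem x hy)
    rcases hS x (hl x List.mem_cons_self) with hx | hx
    · refine ⟨f x :: l', by simpa using hlen, ?_, by simp [hprod]⟩
      simpa [hx] using hl'T
    · exact ⟨l', hlen.trans (Nat.le_succ _), hl'T, by simp [hprod, hx]⟩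

theorem exists_list_prod_eq_of_map_prod_eq (hf : Function.Surjective f)
    (hT : f ⁻¹' T ⊆ S) :
    ∀ (l' : List Q) (g : G), l' ≠ [] → (∀ t ∈ l', t ∈ T) → l'.prod = f g →
      ∃ l : List G, l.length = l'.length ∧ (∀ x ∈ l, x ∈ S) ∧ l.prod = g
  | [], _, hne, _, _ => absurd rfl hne
  | [t], g, _, hl'T, hprod => by
    have hg : f g ∈ T := by simpa [← hprod] using hl'T t List.mem_cons_self
    exact ⟨[g], rfl, by simpa using hT hg, by simp⟩
  | t :: t' :: l', g, _, hl'T, hprod => by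
    obtain ⟨s, rfl⟩ := hf t
    obtain ⟨l, hlen, hlS, hprod_l⟩ :=
      exists_list_prod_eq_of_map_prod_eq hf hT (t' :: l') (s⁻¹ * g) (List.cons_ne_nil _ _)
        (fun t ht => hl'T t (List.mem_cons_of_mem _ ht))
        (by simp only [List.prod_cons] at hprod ⊢; simp [← hprod])
    refine ⟨s :: l, by simp [hlen], ?_, by simp [hprod_l]⟩
    simpa using ⟨hT (hl'T (f s) List.mem_cons_self), hlS⟩

theorem wordLength_eq_of_map_ne_one (hf : Function.Surjective f)
    (hS : S = f ⁻¹' T ∪ (f.ker : Set G)) {g : G} (hg : f g ≠ 1) :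
    wordLength S g = wordLength T (f g) := by
  subst hS
  refine Nat.sInf_eq_sInf_of_subset_of_forall_exists_le ?_ ?_
  · rintro _ ⟨l', rfl, hl'T, hprod⟩
    have hne : l' ≠ [] := by rintro rfl; exact hg hprod.symm
    exact exists_list_prod_eq_of_map_prod_eq hf Set.subset_union_left l' g hne hl'T hprod
  · rintro _ ⟨l, rfl, hlS, rfl⟩
    obtain ⟨l', hlen, hl'T, hprod⟩ := exists_list_prod_eq_map_prod
      (fun s hs => hs.imp id f.mem_ker.mp) l hlS
    exact ⟨l'.length, ⟨l', rfl, hl'T, hprod⟩, hlen⟩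

end WordLength

theorem Function.Surjective.image_setOf_isConj {G Q : Type*} [Group G] [Group Q] {f : G →* Q}
    (hf : Function.Surjective f) (g : G) : f '' {x | IsConj g x} = {q | IsConj (f g) q} := by
  ext q
  constructor
  · rintro ⟨x, hx, rfl⟩
    exact f.map_isConj hx
  · intro hq
    obtain ⟨c, rfl⟩ := isConj_iff.1 hq
    obtain ⟨c, rfl⟩ := hf c
    exact ⟨c * g * c⁻¹, isConj_iff.2 ⟨c, rfl⟩, by simp⟩

theorem stmt_6_general {G Q : Type*} [Group G] [Group Q] (τ : G →* Q)
    (hsurj : Function.Surjective τ)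
    (T : Set Q)
    (S : Set G) (hS : S = τ ⁻¹' T ∪ (τ.ker : Set G)) :
    ∀ g : G, g ∉ τ.ker → conjLength S g = conjLength T (τ g) := by
  intro g hg
  unfold conjLength
  rw [← hsurj.image_setOf_isConj, Set.image_image]
  refine congrArg sInf (Set.image_congr fun x hx => ?_)
  refine wordLength_eq_of_map_ne_one hsurj hS fun hx1 => hg ?_
  rw [τ.mem_ker, ← isConj_one_left, ← hx1]
  exact τ.map_isConj hx

theorem stmt_6 {G Q : Type*} [Group G] [Group Q] (τ : G →* Q)
    (hsurj : Function.Surjective τ) (hF : Finite τ.ker)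
    (T : Set Q) (hTfin : T.Finite) (hTsym : T⁻¹ = T)
    (hTgen : Subgroup.closure T = ⊤)
    (S : Set G) (hS : S = τ ⁻¹' T ∪ (τ.ker : Set G)) :
    ∀ g : G, g ∉ τ.ker → conjLength S g = conjLength T (τ g) :=
  stmt_6_general τ hsurj T S hS
end
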